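/- Let k be a field, and let B₁, B₂, B₃ be k-vector spaces with an alternating multiplication B₁×B₁ → B₂ and a bilinear pairing B₁×B₂ → B₃. Suppose there are bases of B₁, B₂, B₃ realizing the H(p',q') multiplication: E'_{p'+1}E'_j = F'_j for 1 ≤ j ≤ p' and E'_{p'+1}F'_{p'+i} = G'_i for 1 ≤ i ≤ q', all other basis products zero. If u ∈ B₁ and f ∈ B₂ satisfy uf ≠ 0, then the coefficient of E'_{p'+1} in u is nonzero, and consequently the rank of the map B₁ → B₂, v ↦ uv, is at least p'. -/

import Mathlib

/-!
Only `E'_{p'+1}` (index `p'`, as bases are `0`-indexed) multiplies `B₂` nontrivially, so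
`u f = α_{p'+1} · E'_{p'+1} f` and `α_{p'+1} ≠ 0`. Likewise `u E'_j = α_{p'+1} F'_j` for `j ≤ p'`,
so the image of `v ↦ u v` contains the `p'` independent vectors `F'_1, …, F'_{p'}`.
-/

open Module

theorem Module.Basis.apply_eq_repr_smul_of_forall_ne {R M N ι : Type*} [CommSemiring R]
    [AddCommMonoid M] [Module R M] [AddCommMonoid N] [Module R N]
    (E : Basis ι R M) (L : M →ₗ[R] N) (i₀ : ι) (hL : ∀ i ≠ i₀, L (E i) = 0) (u : M) :
    L u = E.repr u i₀ • L (E i₀) := by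
  have : L = (E.coord i₀).smulRight (L (E i₀)) := by
    refine E.ext fun i => ?_
    rcases eq_or_ne i i₀ with rfl | hi
    · simp
    · simp [hL i hi, Finsupp.single_eq_of_ne hi.symm]
  exact congr($this u)

theorem Submodule.card_le_finrank_of_linearIndependent {K V : Type*} [DivisionRing K]
    [AddCommGroup V] [Module K V] {S : Submodule K V} [Module.Finite K S]
    {n : ℕ} {v : Fin n → V} (hv : LinearIndependent K v) (hS : ∀ t, v t ∈ S) :
    n ≤ finrank K S := by
  simpa [finrank_span_eq_card hv] using
    Submodule.finrank_mono (Submodule.span_le.mpr (Set.range_subset_iff.mpr hS))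

theorem statement16_general {k B1 B2 B3 : Type} [Field k]
    [AddCommGroup B1] [Module k B1] [AddCommGroup B2] [Module k B2]
    [AddCommGroup B3] [Module k B3]
    {a b c : ℕ}
    (E : Module.Basis (Fin a) k B1) (F : Module.Basis (Fin b) k B2) (G : Module.Basis (Fin c) k B3)
    (μ1 : B1 →ₗ[k] B1 →ₗ[k] B2) (μ2 : B1 →ₗ[k] B2 →ₗ[k] B3)
    (p' q' : ℕ) (hp' : p' < a)
    (h11 : ∀ i j, μ1 (E i) (E j) =
      (if i.val = p' ∧ j.val < p' then (if h : j.val < b then F ⟨j.val, h⟩ else 0)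
       else if j.val = p' ∧ i.val < p' then -(if h : i.val < b then F ⟨i.val, h⟩ else 0)
       else 0))
    (h12 : ∀ i j, μ2 (E i) (F j) =
      (if i.val = p' ∧ p' ≤ j.val ∧ j.val < p' + q' then
        (if h : j.val - p' < c then G ⟨j.val - p', h⟩ else 0)
       else 0))
    (u : B1) (f : B2) (hne : μ2 u f ≠ 0) :
    E.repr u ⟨p', hp'⟩ ≠ 0 ∧ p' ≤ Module.finrank k (LinearMap.range (μ1 u)) := by
  set i₀ : Fin a := ⟨p', hp'⟩
  have hμ2 : μ2 u = E.repr u i₀ • μ2 (E i₀) :=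
    E.apply_eq_repr_smul_of_forall_ne μ2 i₀ (fun i hi => F.ext fun j => by
      simp [h12, show i.val ≠ p' from (hi <| Fin.ext ·)]) u
  have hE₀ : μ2 (E i₀) ≠ 0 := fun h => hne (by simp [hμ2, h])
  have hc : E.repr u i₀ ≠ 0 := fun h => hne (by simp [hμ2, h])
  refine ⟨hc, ?_⟩
  -- for `p' ≥ b` the rule `h12` would make `E'_{p'+1}` annihilate every `F'_j`
  have hpb : p' < b := by
    by_contra! hb
    exact hE₀ (F.ext fun j => by simp [h12, show ¬p' ≤ j.val by omega])
  have hμ1 (j : Fin p') :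
      μ1 u (E (Fin.castLE hp'.le j)) = E.repr u i₀ • F (Fin.castLE hpb.le j) := by
    rw [← LinearMap.flip_apply (m := u), E.apply_eq_repr_smul_of_forall_ne _ i₀]
    · simp [h11, i₀, dif_pos (j.2.trans hpb), Fin.castLE]
    · intro i hi
      simp [h11, show i.val ≠ p' from (hi <| Fin.ext ·), j.2.ne]
  have : Module.Finite k B2 := Module.Finite.of_basis F
  refine Submodule.card_le_finrank_of_linearIndependent
    (F.linearIndependent.comp _ (Fin.castLE_injective hpb.le)) fun j => ?_
  exact ⟨(E.repr u i₀)⁻¹ • E (Fin.castLE hp'.le j), by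
    simp [hμ1, smul_smul, inv_mul_cancel₀ hc]⟩

theorem statement16 {k B1 B2 B3 : Type} [Field k]
    [AddCommGroup B1] [Module k B1] [AddCommGroup B2] [Module k B2]
    [AddCommGroup B3] [Module k B3]
    {a b c : ℕ}
    (E : Module.Basis (Fin a) k B1) (F : Module.Basis (Fin b) k B2) (G : Module.Basis (Fin c) k B3)
    (μ1 : B1 →ₗ[k] B1 →ₗ[k] B2) (μ2 : B1 →ₗ[k] B2 →ₗ[k] B3)
    (halt : ∀ x, μ1 x x = 0)
    (p' q' : ℕ) (hp' : p' < a)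
    (h11 : ∀ i j, μ1 (E i) (E j) =
      (if i.val = p' ∧ j.val < p' then (if h : j.val < b then F ⟨j.val, h⟩ else 0)
       else if j.val = p' ∧ i.val < p' then -(if h : i.val < b then F ⟨i.val, h⟩ else 0)
       else 0))
    (h12 : ∀ i j, μ2 (E i) (F j) =
      (if i.val = p' ∧ p' ≤ j.val ∧ j.val < p' + q' then
        (if h : j.val - p' < c then G ⟨j.val - p', h⟩ else 0)
       else 0))
    (u : B1) (f : B2) (hne : μ2 u f ≠ 0) :
    E.repr u ⟨p', hp'⟩ ≠ 0 ∧ p' ≤ Module.finrank k (LinearMap.range (μ1 u)) :=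
  statement16_general E F G μ1 μ2 p' q' hp' h11 h12 u f hne
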